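/- Let 𝓗₁, 𝓗₂ be complex Hilbert spaces, Q ∈ B(𝓗₁, 𝓗₂), φ ∈ (0, π/2], and K ∈ B(𝓗₁, 𝓗₂). Then K belongs to the operator hole L(Q; φ) := {K ∈ B(𝓗₁,𝓗₂) : ‖K·sin φ + i·Q·cos φ‖ ≤ 1 and ‖K·sin φ − i·Q·cos φ‖ ≤ 1} if and only if I − sin²φ·K*K − cos²φ·Q*Q ≥ 0 and there exists a selfadjoint contraction C ∈ B(𝓗₁) with sin 2φ·(K*Q − Q*K)/(2i) = D_{K,Q}·C·D_{K,Q}, where D_{K,Q} := (I − sin²φ·K*K − cos²φ·Q*Q)^{1/2}. -/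

import Mathlib

set_option maxHeartbeats 1000000

open ContinuousLinearMap Complex
open scoped InnerProductSpace

noncomputable section

/-- Positive square root of a (nonnegative selfadjoint) bounded operator,
via the continuous functional calculus. -/
def opSqrt {H : Type*} [NormedAddCommGroup H] [InnerProductSpace ℂ H] [CompleteSpace H]
    (A : H →L[ℂ] H) : H →L[ℂ] H :=
  cfc Real.sqrt A

/-- Defect operator `D_T = (I - T*T)^{1/2}` of a contraction `T`. -/
def defectOp {H K : Type*} [NormedAddCommGroup H] [InnerProductSpace ℂ H] [CompleteSpace H]
    [NormedAddCommGroup K] [InnerProductSpace ℂ K] [CompleteSpace K] (T : H →L[ℂ] K) :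
    H →L[ℂ] H :=
  opSqrt (1 - (ContinuousLinearMap.adjoint T).comp T)

/-- Defect operator `D_{T*} = (I - TT*)^{1/2}` of a contraction `T`. -/
def codefectOp {H K : Type*} [NormedAddCommGroup H] [InnerProductSpace ℂ H] [CompleteSpace H]
    [NormedAddCommGroup K] [InnerProductSpace ℂ K] [CompleteSpace K] (T : H →L[ℂ] K) :
    K →L[ℂ] K :=
  opSqrt (1 - T.comp (ContinuousLinearMap.adjoint T))

/-- The class `C_H(φ)`: `‖T sin φ + i cos φ I‖ ≤ 1` and `‖T sin φ - i cos φ I‖ ≤ 1`. -/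
def CHclass {H : Type*} [NormedAddCommGroup H] [InnerProductSpace ℂ H] [CompleteSpace H]
    (φ : ℝ) (T : H →L[ℂ] H) : Prop :=
  ‖(Real.sin φ : ℂ) • T + (Complex.I * (Real.cos φ : ℂ)) • 1‖ ≤ 1 ∧
  ‖(Real.sin φ : ℂ) • T - (Complex.I * (Real.cos φ : ℂ)) • 1‖ ≤ 1

/-- `D_{K,Q} = (I - sin²φ K*K - cos²φ Q*Q)^{1/2}`. -/
def DKQ {𝓗₁ 𝓗₂ : Type*}
    [NormedAddCommGroup 𝓗₁] [InnerProductSpace ℂ 𝓗₁] [CompleteSpace 𝓗₁]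
    [NormedAddCommGroup 𝓗₂] [InnerProductSpace ℂ 𝓗₂] [CompleteSpace 𝓗₂]
    (φ : ℝ) (K Q : 𝓗₁ →L[ℂ] 𝓗₂) : 𝓗₁ →L[ℂ] 𝓗₁ :=
  opSqrt (1 - ((Real.sin φ : ℂ) ^ 2) • ((ContinuousLinearMap.adjoint K).comp K)
      - ((Real.cos φ : ℂ) ^ 2) • ((ContinuousLinearMap.adjoint Q).comp Q))

section Helpers

variable {H : Type*} [NormedAddCommGroup H] [InnerProductSpace ℂ H] [CompleteSpace H]
variable {H₁ H₂ : Type*} [NormedAddCommGroup H₁] [InnerProductSpace ℂ H₁] [CompleteSpace H₁]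
  [NormedAddCommGroup H₂] [InnerProductSpace ℂ H₂] [CompleteSpace H₂]

lemma real_cs (a1 a2 b1 b2 X Y : ℝ) (ha1 : 0 ≤ a1) (ha2 : 0 ≤ a2) (hb1 : 0 ≤ b1) (hb2 : 0 ≤ b2)
    (hX : 0 ≤ X) (hY : 0 ≤ Y) (hax : a1 ^ 2 + a2 ^ 2 = 2 * X ^ 2)
    (hby : b1 ^ 2 + b2 ^ 2 = 2 * Y ^ 2) :
    2⁻¹ * (a1 * b1 + a2 * b2) ≤ X * Y := by
  nlinarith [sq_nonneg (a1 * b2 - a2 * b1), sq_nonneg (a1 * b1 + a2 * b2 - 2 * X * Y),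
    mul_nonneg hX hY, sq_nonneg (a1 * b1 + a2 * b2), mul_nonneg (mul_nonneg ha1 hb1)
    (mul_nonneg ha2 hb2)]

lemma norm_le_one_iff_pos (A : H₁ →L[ℂ] H₂) :
    ‖A‖ ≤ 1 ↔ (1 - (ContinuousLinearMap.adjoint A) ∘L A).IsPositive := by
  have hsa : IsSelfAdjoint (1 - (ContinuousLinearMap.adjoint A) ∘L A) := by
    rw [isSelfAdjoint_iff']
    rw [map_sub, adjoint_comp, adjoint_adjoint]
    congr 1
    exact ContinuousLinearMap.adjoint_id
  have hre : ∀ x, Complex.re ⟪(1 - (ContinuousLinearMap.adjoint A) ∘L A) x, x⟫_ℂ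
      = ‖x‖ ^ 2 - ‖A x‖ ^ 2 := by
    intro x
    rw [ContinuousLinearMap.sub_apply, inner_sub_left, ContinuousLinearMap.one_apply,
      ContinuousLinearMap.comp_apply, ContinuousLinearMap.adjoint_inner_left]
    rw [Complex.sub_re]
    congr 1
    · exact inner_self_eq_norm_sq (𝕜 := ℂ) x
    · exact inner_self_eq_norm_sq (𝕜 := ℂ) (A x)
  constructor
  · intro hA
    refine ⟨hsa.isSymmetric, fun x => ?_⟩
    rw [ContinuousLinearMap.reApplyInnerSelf_apply]
    have h0 : RCLike.re ⟪(1 - (ContinuousLinearMap.adjoint A) ∘L A) x, x⟫_ℂ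
        = ‖x‖ ^ 2 - ‖A x‖ ^ 2 := hre x
    rw [h0]
    have h1 : ‖A x‖ ≤ ‖A‖ * ‖x‖ := A.le_opNorm x
    nlinarith [norm_nonneg (A x), norm_nonneg x,
      mul_le_mul_of_nonneg_right hA (norm_nonneg x)]
  · intro hpos
    refine ContinuousLinearMap.opNorm_le_bound _ zero_le_one (fun x => ?_)
    have h1 : (0:ℝ) ≤ ‖x‖ ^ 2 - ‖A x‖ ^ 2 := by
      rw [← hre x]; exact hpos.re_inner_nonneg_left x
    nlinarith [norm_nonneg (A x), norm_nonneg x]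

lemma opSqrt_isSelfAdjoint' (A : H →L[ℂ] H) : IsSelfAdjoint (opSqrt A) :=
  cfc_predicate Real.sqrt A

lemma opSqrt_mul_self' (A : H →L[ℂ] H) (hA : A.IsPositive) : opSqrt A ∘L opSqrt A = A := by
  have h0 : (0 : H →L[ℂ] H) ≤ A := (ContinuousLinearMap.nonneg_iff_isPositive A).mpr hA
  have h1 : opSqrt A * opSqrt A = A := by
    rw [opSqrt, ← cfc_mul Real.sqrt Real.sqrt A Real.continuous_sqrt.continuousOn
      Real.continuous_sqrt.continuousOn]
    have h2 : (spectrum ℝ A).EqOn (fun x => Real.sqrt x * Real.sqrt x) id := fun x hx => by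
      simpa using Real.mul_self_sqrt (spectrum_nonneg_of_nonneg h0 hx)
    rw [cfc_congr h2, cfc_id ℝ A hA.isSelfAdjoint]
  exact h1

lemma opSqrt_norm_sq (A : H →L[ℂ] H) (hA : A.IsPositive) (x : H) :
    ‖opSqrt A x‖ ^ 2 = Complex.re ⟪A x, x⟫_ℂ := by
  conv_rhs => rw [← opSqrt_mul_self' A hA]
  have hsa := opSqrt_isSelfAdjoint' A
  have h2 : ⟪(opSqrt A) ((opSqrt A) x), x⟫_ℂ = ⟪(opSqrt A) x, (opSqrt A) x⟫_ℂ :=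
    hsa.isSymmetric ((opSqrt A) x) x
  rw [ContinuousLinearMap.comp_apply, h2]
  exact (inner_self_eq_norm_sq (𝕜 := ℂ) _).symm

lemma pos_inner_le {P : H →L[ℂ] H} (hP : P.IsPositive) (x y : H) :
    ‖⟪P x, y⟫_ℂ‖ ≤ Real.sqrt (Complex.re ⟪P x, x⟫_ℂ) * Real.sqrt (Complex.re ⟪P y, y⟫_ℂ) := by
  have hsa := opSqrt_isSelfAdjoint' P
  have h2 : ⟪P x, y⟫_ℂ = ⟪opSqrt P x, opSqrt P y⟫_ℂ := by
    conv_lhs => rw [← opSqrt_mul_self' P hP]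
    exact hsa.isSymmetric (opSqrt P x) y
  rw [h2]
  have h3 := norm_inner_le_norm (𝕜 := ℂ) (opSqrt P x) (opSqrt P y)
  have h4 : ‖opSqrt P x‖ = Real.sqrt (Complex.re ⟪P x, x⟫_ℂ) := by
    rw [← opSqrt_norm_sq P hP x, Real.sqrt_sq (norm_nonneg _)]
  have h5 : ‖opSqrt P y‖ = Real.sqrt (Complex.re ⟪P y, y⟫_ℂ) := by
    rw [← opSqrt_norm_sq P hP y, Real.sqrt_sq (norm_nonneg _)]
  rw [← h4, ← h5]
  exact h3

lemma onepm_pos (C : H →L[ℂ] H) (hsa : IsSelfAdjoint C) (hn : ‖C‖ ≤ 1) :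
    (1 + C).IsPositive ∧ (1 - C).IsPositive := by
  have key : ∀ (C' : H →L[ℂ] H), IsSelfAdjoint C' → ‖C'‖ ≤ 1 → (1 + C').IsPositive := by
    intro C' hsa' hn'
    refine ⟨((IsSelfAdjoint.one (H →L[ℂ] H)).add hsa').isSymmetric, fun x => ?_⟩
    rw [ContinuousLinearMap.reApplyInnerSelf_apply]
    have hz : ⟪(1 + C') x, x⟫_ℂ = ⟪x, x⟫_ℂ + ⟪C' x, x⟫_ℂ := by
      rw [ContinuousLinearMap.add_apply, inner_add_left, ContinuousLinearMap.one_apply]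
    rw [hz, map_add]
    have h1 : RCLike.re ⟪x, x⟫_ℂ = ‖x‖ ^ 2 := inner_self_eq_norm_sq (𝕜 := ℂ) x
    have h2 : |RCLike.re ⟪C' x, x⟫_ℂ| ≤ ‖x‖ ^ 2 := by
      refine (RCLike.abs_re_le_norm _).trans ?_
      refine (norm_inner_le_norm _ _).trans ?_
      have h4 : ‖C' x‖ ≤ 1 * ‖x‖ := (C'.le_opNorm x).trans
        (mul_le_mul_of_nonneg_right hn' (norm_nonneg x))
      nlinarith [norm_nonneg x, norm_nonneg (C' x)]
    rw [h1]
    linarith [(abs_le.mp h2).1]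
  refine ⟨key C hsa hn, ?_⟩
  have h5 : (1 : H →L[ℂ] H) - C = 1 + (-C) := by abel
  rw [h5]
  exact key (-C) hsa.neg (by rw [norm_neg]; exact hn)

lemma factor_through {W : Type*} [NormedAddCommGroup W] [NormedSpace ℂ W] [CompleteSpace W]
    (D : H →L[ℂ] H) (T : H →L[ℂ] W) (c : ℝ) (hc : 0 ≤ c) (hbT : ∀ x, ‖T x‖ ≤ c * ‖D x‖) :
    ∃ G : H →L[ℂ] W, (∀ x, G (D x) = T x) ∧ (∀ v, ‖G v‖ ≤ c * ‖v‖) ∧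
      (∀ v : H, v ∈ (LinearMap.range (D : H →ₗ[ℂ] H)).topologicalClosureᗮ → G v = 0) := by
  set Dl : H →ₗ[ℂ] H := (D : H →ₗ[ℂ] H) with hDl
  set R : Submodule ℂ H := LinearMap.range Dl with hRdef
  set M : Submodule ℂ H := R.topologicalClosure with hMdef
  haveI : CompleteSpace M := IsClosed.completeSpace_coe (hs := R.isClosed_topologicalClosure)
  have hker : LinearMap.ker Dl ≤ LinearMap.ker (T : H →ₗ[ℂ] W) := by
    intro x hx
    have hx' : D x = 0 := hx
    have h2 := hbT x
    rw [hx', norm_zero, mul_zero] at h2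
    simpa [LinearMap.mem_ker] using norm_le_zero_iff.mp h2
  set T0 : R →ₗ[ℂ] W :=
    ((LinearMap.ker Dl).liftQ (T : H →ₗ[ℂ] W) hker).comp
      Dl.quotKerEquivRange.symm.toLinearMap with hT0def
  have hT0 : ∀ (x : H) (h : Dl x ∈ R), T0 ⟨Dl x, h⟩ = T x := by
    intro x h
    have h1 : Dl.quotKerEquivRange.symm ⟨Dl x, h⟩ = (LinearMap.ker Dl).mkQ x :=
      Dl.quotKerEquivRange_symm_apply_image x _
    simp [hT0def, h1]
  have hT0b : ∀ u : ↥R, ‖T0 u‖ ≤ c * ‖u‖ := by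
    rintro ⟨v, x, rfl⟩
    rw [hT0 x ⟨x, rfl⟩]; exact hbT x
  set Tc : ↥R →L[ℂ] W := LinearMap.mkContinuous T0 c hT0b with hTcdef
  set e0 : ↥R →ₗ[ℂ] ↥M := Submodule.inclusion R.le_topologicalClosure with he0def
  have he0 : ∀ u : ↥R, ‖e0 u‖ = ‖u‖ := fun u => rfl
  set e : ↥R →L[ℂ] ↥M := LinearMap.mkContinuous e0 1 (fun u => by rw [he0, one_mul]) with hedef
  have hei : Isometry e := AddMonoidHomClass.isometry_of_norm e he0
  have hui : IsUniformInducing e := hei.isUniformInducing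
  have hdense : DenseRange e := by
    intro m
    have hm : (m : H) ∈ closure (R : Set H) := by
      have h2 : (m : H) ∈ (R.topologicalClosure : Set H) := m.2
      rwa [Submodule.topologicalClosure_coe] at h2
    rw [mem_closure_iff_seq_limit] at hm
    obtain ⟨f, hfR, hfl⟩ := hm
    rw [mem_closure_iff_seq_limit]
    exact ⟨fun n => e ⟨f n, hfR n⟩, fun n => ⟨_, rfl⟩, tendsto_subtype_rng.mpr hfl⟩
  set Ghat : ↥M →L[ℂ] W := Tc.extend e with hGhatdef
  have hGe : ∀ u : ↥R, Ghat (e u) = Tc u := fun u => ContinuousLinearMap.extend_eq Tc hdense hui u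
  have hGb : ∀ m : ↥M, ‖Ghat m‖ ≤ c * ‖m‖ := by
    intro m
    refine hdense.induction_on m (isClosed_le (continuous_norm.comp Ghat.continuous)
      (continuous_const.mul continuous_norm)) (fun u => ?_)
    rw [hGe u]
    have h3 : ‖e u‖ = ‖u‖ := he0 u
    rw [h3]
    simpa [hTcdef] using hT0b u
  refine ⟨Ghat.comp (Submodule.orthogonalProjectionOnto M), ?_, ?_, ?_⟩
  · intro x
    have hmem : D x ∈ M := R.le_topologicalClosure ⟨x, rfl⟩
    have hproj : Submodule.orthogonalProjectionOnto M (D x) = ⟨D x, hmem⟩ :=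
      Submodule.orthogonalProjectionOnto_mem_subspace_eq_self (K := M) ⟨D x, hmem⟩
    rw [ContinuousLinearMap.comp_apply, hproj]
    have h4 : (⟨D x, hmem⟩ : ↥M) = e ⟨D x, ⟨x, rfl⟩⟩ := rfl
    rw [h4, hGe]
    exact hT0 x ⟨x, rfl⟩
  · intro v
    rw [ContinuousLinearMap.comp_apply]
    have h5 : ‖Submodule.orthogonalProjectionOnto M v‖ ≤ ‖v‖ :=
      calc ‖Submodule.orthogonalProjectionOnto M v‖ ≤ ‖Submodule.orthogonalProjectionOnto M‖ * ‖v‖ :=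
            (Submodule.orthogonalProjectionOnto M).le_opNorm v
        _ ≤ 1 * ‖v‖ := mul_le_mul_of_nonneg_right (Submodule.orthogonalProjectionOnto_norm_le M) (norm_nonneg v)
        _ = ‖v‖ := one_mul _
    exact (hGb _).trans (mul_le_mul_of_nonneg_left h5 hc)
  · intro v hv
    rw [ContinuousLinearMap.comp_apply,
      Submodule.orthogonalProjectionOnto_apply_of_mem_orthogonal hv, map_zero]

lemma aux_factor (D S : H →L[ℂ] H) (hD : IsSelfAdjoint D) (hS : IsSelfAdjoint S)
    (hb : ∀ x y, ‖⟪S x, y⟫_ℂ‖ ≤ ‖D x‖ * ‖D y‖) :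
    ∃ C : H →L[ℂ] H, IsSelfAdjoint C ∧ ‖C‖ ≤ 1 ∧ D ∘L (C ∘L D) = S := by
  have hD' : ContinuousLinearMap.adjoint D = D := (isSelfAdjoint_iff').mp hD
  have hSx : ∀ x, ‖S x‖ ≤ ‖D‖ * ‖D x‖ := by
    intro x
    rcases eq_or_ne (S x) 0 with h | h
    · rw [h, norm_zero]; positivity
    · have h1 := hb x (S x)
      have h2 : ⟪S x, S x⟫_ℂ = ((‖S x‖ : ℂ))^2 := inner_self_eq_norm_sq_to_K (S x)
      rw [h2] at h1
      have h3 : ‖((‖S x‖ : ℂ))^2‖ = ‖S x‖^2 := by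
        rw [norm_pow, Complex.norm_real, Real.norm_of_nonneg (norm_nonneg _)]
      rw [h3] at h1
      have h4 : ‖D (S x)‖ ≤ ‖D‖ * ‖S x‖ := D.le_opNorm (S x)
      have h5 : 0 < ‖S x‖ := norm_pos_iff.mpr h
      nlinarith [norm_nonneg (D x)]
  obtain ⟨G₁, hG₁D, hG₁b, hG₁perp⟩ := factor_through D S ‖D‖ (norm_nonneg D) hSx
  set M : Submodule ℂ H := (LinearMap.range (D : H →ₗ[ℂ] H)).topologicalClosure with hMdef
  haveI : CompleteSpace M :=
    IsClosed.completeSpace_coe (hs := (LinearMap.range (D : H →ₗ[ℂ] H)).isClosed_topologicalClosure)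
  set B : H →L[ℂ] H := ContinuousLinearMap.adjoint G₁ with hBdef
  have hBD : ∀ x y, ⟪B x, D y⟫_ℂ = ⟪S x, y⟫_ℂ := by
    intro x y
    rw [hBdef]
    rw [ContinuousLinearMap.adjoint_inner_left G₁ (D y) x, hG₁D y]
    exact (hS.isSymmetric x y).symm
  have hBmem : ∀ x, B x ∈ M := by
    intro x
    rw [← Submodule.orthogonal_orthogonal M]
    rw [Submodule.mem_orthogonal]
    intro w hw
    rw [hBdef, ContinuousLinearMap.adjoint_inner_right G₁ w x, hG₁perp w hw, inner_zero_left]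
  have hBb : ∀ x, ‖B x‖ ≤ 1 * ‖D x‖ := by
    intro x
    have hclos : ∀ v ∈ M, ‖⟪B x, v⟫_ℂ‖ ≤ ‖D x‖ * ‖v‖ := by
      intro v hv
      have hsub : (M : Set H) ⊆ {v : H | ‖⟪B x, v⟫_ℂ‖ ≤ ‖D x‖ * ‖v‖} := by
        rw [hMdef, Submodule.topologicalClosure_coe]
        refine closure_minimal ?_ (isClosed_le (Continuous.norm ?_)
          (continuous_const.mul continuous_norm))
        · rintro v ⟨y, rfl⟩
          have : (D : H →ₗ[ℂ] H) y = D y := rfl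
          rw [Set.mem_setOf_eq, this, hBD x y]
          exact hb x y
        · exact Continuous.inner continuous_const continuous_id
      exact hsub hv
    rcases eq_or_ne (B x) 0 with h | h
    · rw [h, norm_zero]; positivity
    · have h1 := hclos (B x) (hBmem x)
      have h2 : ⟪B x, B x⟫_ℂ = ((‖B x‖ : ℂ))^2 := inner_self_eq_norm_sq_to_K (B x)
      rw [h2] at h1
      have h3 : ‖((‖B x‖ : ℂ))^2‖ = ‖B x‖^2 := by
        rw [norm_pow, Complex.norm_real, Real.norm_of_nonneg (norm_nonneg _)]
      rw [h3] at h1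
      have h5 : 0 < ‖B x‖ := norm_pos_iff.mpr h
      nlinarith
  obtain ⟨C', hC'D, hC'b, -⟩ := factor_through D B 1 zero_le_one hBb
  have hDB : ∀ x, D (B x) = S x := by
    intro x
    refine ext_inner_right ℂ (fun y => ?_)
    have h9 : ⟪D (B x), y⟫_ℂ = ⟪B x, D y⟫_ℂ := hD.isSymmetric (B x) y
    rw [h9, hBD x y]
  have hDCD : D ∘L (C' ∘L D) = S := by
    ext x
    simp only [ContinuousLinearMap.comp_apply]
    rw [hC'D x, hDB x]
  have hC'n : ‖C'‖ ≤ 1 := by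
    refine ContinuousLinearMap.opNorm_le_bound _ zero_le_one (fun v => ?_)
    simpa using hC'b v
  set C : H →L[ℂ] H := (2 : ℂ)⁻¹ • (C' + ContinuousLinearMap.adjoint C') with hCdef
  have hadj : D ∘L (ContinuousLinearMap.adjoint C' ∘L D) = S := by
    have h1 : ContinuousLinearMap.adjoint (D ∘L (C' ∘L D))
        = D ∘L (ContinuousLinearMap.adjoint C' ∘L D) := by
      rw [adjoint_comp, adjoint_comp, hD', ← ContinuousLinearMap.comp_assoc]
    rw [← h1, hDCD, hS.adjoint_eq]
  refine ⟨C, ?_, ?_, ?_⟩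
  · rw [hCdef, IsSelfAdjoint]
    rw [star_smul, star_add, star_eq_adjoint, star_eq_adjoint, adjoint_adjoint]
    rw [show star (2 : ℂ)⁻¹ = (2 : ℂ)⁻¹ by simp, add_comm]
  · rw [hCdef]
    rw [norm_smul]
    have h6 : ‖ContinuousLinearMap.adjoint C'‖ = ‖C'‖ := LinearIsometryEquiv.norm_map _ C'
    have h7 : ‖C' + ContinuousLinearMap.adjoint C'‖ ≤ 2 := by
      refine (norm_add_le _ _).trans ?_
      rw [h6]; linarith
    have h8 : ‖(2 : ℂ)⁻¹‖ = 2⁻¹ := by simp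
    rw [h8]
    nlinarith [norm_nonneg (C' + ContinuousLinearMap.adjoint C')]
  · rw [hCdef, ContinuousLinearMap.smul_comp, ContinuousLinearMap.comp_smul,
      ContinuousLinearMap.add_comp, ContinuousLinearMap.comp_add, hDCD, hadj]
    rw [← two_smul ℂ S, smul_smul, inv_mul_cancel₀ (two_ne_zero), one_smul]

lemma expand_plus (K Q : H₁ →L[ℂ] H₂) (s c : ℝ) :
    1 - (ContinuousLinearMap.adjoint ((s : ℂ) • K + (Complex.I * (c : ℂ)) • Q)) ∘L
        ((s : ℂ) • K + (Complex.I * (c : ℂ)) • Q)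
      = (1 - ((s : ℂ) ^ 2) • ((ContinuousLinearMap.adjoint K) ∘L K)
          - ((c : ℂ) ^ 2) • ((ContinuousLinearMap.adjoint Q) ∘L Q))
        - (Complex.I * (s : ℂ) * (c : ℂ)) •
            ((ContinuousLinearMap.adjoint K) ∘L Q - (ContinuousLinearMap.adjoint Q) ∘L K) := by
  have hadj : ContinuousLinearMap.adjoint ((s : ℂ) • K + (Complex.I * (c : ℂ)) • Q)
      = (s : ℂ) • ContinuousLinearMap.adjoint K
        + (-(Complex.I * (c : ℂ))) • ContinuousLinearMap.adjoint Q := by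
    rw [map_add, LinearIsometryEquiv.map_smulₛₗ, LinearIsometryEquiv.map_smulₛₗ]
    congr 1
    · congr 1
      simp
    · congr 1
      simp [map_mul]
  rw [hadj, ContinuousLinearMap.add_comp, ContinuousLinearMap.smul_comp,
    ContinuousLinearMap.smul_comp, ContinuousLinearMap.comp_add, ContinuousLinearMap.comp_add,
    ContinuousLinearMap.comp_smul, ContinuousLinearMap.comp_smul, ContinuousLinearMap.comp_smul,
    ContinuousLinearMap.comp_smul]
  match_scalars
  all_goals first
    | ring1
    | linear_combination (c : ℂ) ^ 2 * Complex.I_sq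

lemma expand_minus (K Q : H₁ →L[ℂ] H₂) (s c : ℝ) :
    1 - (ContinuousLinearMap.adjoint ((s : ℂ) • K - (Complex.I * (c : ℂ)) • Q)) ∘L
        ((s : ℂ) • K - (Complex.I * (c : ℂ)) • Q)
      = (1 - ((s : ℂ) ^ 2) • ((ContinuousLinearMap.adjoint K) ∘L K)
          - ((c : ℂ) ^ 2) • ((ContinuousLinearMap.adjoint Q) ∘L Q))
        + (Complex.I * (s : ℂ) * (c : ℂ)) •
            ((ContinuousLinearMap.adjoint K) ∘L Q - (ContinuousLinearMap.adjoint Q) ∘L K) := by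
  have hadj : ContinuousLinearMap.adjoint ((s : ℂ) • K - (Complex.I * (c : ℂ)) • Q)
      = (s : ℂ) • ContinuousLinearMap.adjoint K
        - (-(Complex.I * (c : ℂ))) • ContinuousLinearMap.adjoint Q := by
    rw [map_sub, LinearIsometryEquiv.map_smulₛₗ, LinearIsometryEquiv.map_smulₛₗ]
    congr 1
    · congr 1
      simp
    · congr 1
      simp [map_mul]
  rw [hadj, ContinuousLinearMap.sub_comp, ContinuousLinearMap.smul_comp,
    ContinuousLinearMap.smul_comp, ContinuousLinearMap.comp_sub, ContinuousLinearMap.comp_sub,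
    ContinuousLinearMap.comp_smul, ContinuousLinearMap.comp_smul, ContinuousLinearMap.comp_smul,
    ContinuousLinearMap.comp_smul]
  match_scalars
  all_goals first
    | ring1
    | linear_combination (c : ℂ) ^ 2 * Complex.I_sq
    | linear_combination (-(c : ℂ) ^ 2) * Complex.I_sq

end Helpers

theorem statement9 {𝓗₁ 𝓗₂ : Type*}
    [NormedAddCommGroup 𝓗₁] [InnerProductSpace ℂ 𝓗₁] [CompleteSpace 𝓗₁]
    [NormedAddCommGroup 𝓗₂] [InnerProductSpace ℂ 𝓗₂] [CompleteSpace 𝓗₂]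
    (Q K : 𝓗₁ →L[ℂ] 𝓗₂) (φ : ℝ) (hφ₁ : 0 < φ) (hφ₂ : φ ≤ Real.pi / 2) :
    (‖(Real.sin φ : ℂ) • K + (Complex.I * (Real.cos φ : ℂ)) • Q‖ ≤ 1 ∧
     ‖(Real.sin φ : ℂ) • K - (Complex.I * (Real.cos φ : ℂ)) • Q‖ ≤ 1) ↔
      ((1 - ((Real.sin φ : ℂ) ^ 2) • ((ContinuousLinearMap.adjoint K).comp K)
          - ((Real.cos φ : ℂ) ^ 2) • ((ContinuousLinearMap.adjoint Q).comp Q)).IsPositive ∧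
        ∃ C : 𝓗₁ →L[ℂ] 𝓗₁, IsSelfAdjoint C ∧ ‖C‖ ≤ 1 ∧
          ((Real.sin (2 * φ) : ℂ)) •
              (((2 : ℂ) * Complex.I)⁻¹ •
                ((ContinuousLinearMap.adjoint K).comp Q - (ContinuousLinearMap.adjoint Q).comp K)) =
            (DKQ φ K Q).comp (C.comp (DKQ φ K Q))) := by
  set s : ℝ := Real.sin φ with hs
  set c : ℝ := Real.cos φ with hc
  set T : 𝓗₁ →L[ℂ] 𝓗₁ := 1 - ((s : ℂ) ^ 2) • ((ContinuousLinearMap.adjoint K).comp K)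
      - ((c : ℂ) ^ 2) • ((ContinuousLinearMap.adjoint Q).comp Q) with hT
  set X : 𝓗₁ →L[ℂ] 𝓗₁ := (ContinuousLinearMap.adjoint K).comp Q
      - (ContinuousLinearMap.adjoint Q).comp K with hX
  set μ : ℂ := Complex.I * (s : ℂ) * (c : ℂ) with hμ
  set Sop : 𝓗₁ →L[ℂ] 𝓗₁ := ((Real.sin (2 * φ) : ℂ)) • (((2 : ℂ) * Complex.I)⁻¹ • X) with hSopdef
  have hSopμ : Sop = (-μ) • X := by
    rw [hSopdef, smul_smul]
    congr 1
    have h1 : Real.sin (2 * φ) = 2 * s * c := by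
      rw [hs, hc]; exact Real.sin_two_mul φ
    rw [h1]
    push_cast
    rw [mul_inv, Complex.inv_I, hμ]
    ring
  have hDKQ : DKQ φ K Q = opSqrt T := rfl
  have hDsa : IsSelfAdjoint (opSqrt T) := opSqrt_isSelfAdjoint' T
  have hD' : ContinuousLinearMap.adjoint (opSqrt T) = opSqrt T := (isSelfAdjoint_iff').mp hDsa
  -- selfadjointness of T and Sop
  have hKK : IsSelfAdjoint ((ContinuousLinearMap.adjoint K).comp K) := by
    rw [isSelfAdjoint_iff']
    rw [show (ContinuousLinearMap.adjoint K).comp K = (ContinuousLinearMap.adjoint K) ∘L K from rfl,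
      adjoint_comp, adjoint_adjoint]
  have hQQ : IsSelfAdjoint ((ContinuousLinearMap.adjoint Q).comp Q) := by
    rw [isSelfAdjoint_iff']
    rw [show (ContinuousLinearMap.adjoint Q).comp Q = (ContinuousLinearMap.adjoint Q) ∘L Q from rfl,
      adjoint_comp, adjoint_adjoint]
  have hs2 : IsSelfAdjoint ((s : ℂ) ^ 2) := by
    rw [IsSelfAdjoint, Complex.star_def, ← Complex.ofReal_pow, Complex.conj_ofReal]
  have hc2 : IsSelfAdjoint ((c : ℂ) ^ 2) := by
    rw [IsSelfAdjoint, Complex.star_def, ← Complex.ofReal_pow, Complex.conj_ofReal]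
  have hTsa : IsSelfAdjoint T := by
    rw [hT]
    exact ((IsSelfAdjoint.one (𝓗₁ →L[ℂ] 𝓗₁)).sub (hs2.smul hKK)).sub (hc2.smul hQQ)
  have hXstar : star X = -X := by
    rw [hX, star_sub, star_eq_adjoint, star_eq_adjoint]
    rw [show ((ContinuousLinearMap.adjoint K).comp Q) = (ContinuousLinearMap.adjoint K) ∘L Q
      from rfl, show ((ContinuousLinearMap.adjoint Q).comp K) = (ContinuousLinearMap.adjoint Q) ∘L K
      from rfl, adjoint_comp, adjoint_comp, adjoint_adjoint, adjoint_adjoint]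
    abel
  have hμconj : (starRingEnd ℂ) μ = -μ := by
    rw [hμ, map_mul, map_mul, Complex.conj_I, Complex.conj_ofReal, Complex.conj_ofReal]
    ring
  have hSopsa : IsSelfAdjoint Sop := by
    rw [hSopμ, IsSelfAdjoint, star_smul, hXstar, Complex.star_def, map_neg, hμconj]
    rw [neg_neg, smul_neg, ← neg_smul]
  -- plus/minus operators
  have hplus_eq : 1 - (ContinuousLinearMap.adjoint ((s : ℂ) • K + (Complex.I * (c : ℂ)) • Q)) ∘L
      ((s : ℂ) • K + (Complex.I * (c : ℂ)) • Q) = T - μ • X := by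
    rw [expand_plus K Q s c, hT, hX, hμ]
  have hminus_eq : 1 - (ContinuousLinearMap.adjoint ((s : ℂ) • K - (Complex.I * (c : ℂ)) • Q)) ∘L
      ((s : ℂ) • K - (Complex.I * (c : ℂ)) • Q) = T + μ • X := by
    rw [expand_minus K Q s c, hT, hX, hμ]
  have hTmS : T - μ • X = T + Sop := by
    rw [hSopμ, neg_smul, ← sub_eq_add_neg]
  have hTpS : T + μ • X = T - Sop := by
    rw [hSopμ, neg_smul, sub_neg_eq_add]
  constructor
  · rintro ⟨h1n, h2n⟩
    have hP1 : (T - μ • X).IsPositive := by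
      rw [← hplus_eq]
      exact (norm_le_one_iff_pos _).mp h1n
    have hP2 : (T + μ • X).IsPositive := by
      rw [← hminus_eq]
      exact (norm_le_one_iff_pos _).mp h2n
    have hsum : ∀ z : 𝓗₁, Complex.re ⟪(T - μ • X) z, z⟫_ℂ + Complex.re ⟪(T + μ • X) z, z⟫_ℂ
        = 2 * Complex.re ⟪T z, z⟫_ℂ := by
      intro z
      have h1 : (T - μ • X) z + (T + μ • X) z = T z + T z := by
        simp only [ContinuousLinearMap.sub_apply, ContinuousLinearMap.add_apply,
          ContinuousLinearMap.smul_apply]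
        abel
      have h2 : ⟪(T - μ • X) z, z⟫_ℂ + ⟪(T + μ • X) z, z⟫_ℂ = ⟪T z, z⟫_ℂ + ⟪T z, z⟫_ℂ := by
        rw [← inner_add_left, h1, inner_add_left]
      calc Complex.re ⟪(T - μ • X) z, z⟫_ℂ + Complex.re ⟪(T + μ • X) z, z⟫_ℂ
          = Complex.re (⟪(T - μ • X) z, z⟫_ℂ + ⟪(T + μ • X) z, z⟫_ℂ) := by
            rw [Complex.add_re]
        _ = Complex.re (⟪T z, z⟫_ℂ + ⟪T z, z⟫_ℂ) := by rw [h2]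
        _ = 2 * Complex.re ⟪T z, z⟫_ℂ := by rw [Complex.add_re]; ring
    have hTpos : T.IsPositive := by
      refine ⟨hTsa.isSymmetric, fun z => ?_⟩
      rw [ContinuousLinearMap.reApplyInnerSelf_apply]
      have ha : (0:ℝ) ≤ Complex.re ⟪(T - μ • X) z, z⟫_ℂ := hP1.re_inner_nonneg_left z
      have hb : (0:ℝ) ≤ Complex.re ⟪(T + μ • X) z, z⟫_ℂ := hP2.re_inner_nonneg_left z
      have hgoal : (0:ℝ) ≤ Complex.re ⟪T z, z⟫_ℂ := by linarith [hsum z]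
      exact hgoal
    refine ⟨hTpos, ?_⟩
    have hbound : ∀ x y, ‖⟪Sop x, y⟫_ℂ‖ ≤ ‖opSqrt T x‖ * ‖opSqrt T y‖ := by
      intro x y
      have hdec : ⟪Sop x, y⟫_ℂ
          = (2:ℂ)⁻¹ * (⟪(T - μ • X) x, y⟫_ℂ - ⟪(T + μ • X) x, y⟫_ℂ) := by
        rw [hSopμ]
        simp only [ContinuousLinearMap.sub_apply, ContinuousLinearMap.add_apply,
          ContinuousLinearMap.smul_apply, inner_sub_left, inner_add_left, inner_smul_left,
          map_neg]
        ring
      have hn1 : ‖⟪Sop x, y⟫_ℂ‖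
          ≤ 2⁻¹ * (‖⟪(T - μ • X) x, y⟫_ℂ‖ + ‖⟪(T + μ • X) x, y⟫_ℂ‖) := by
        rw [hdec, norm_mul]
        have : ‖(2:ℂ)⁻¹‖ = 2⁻¹ := by simp
        rw [this]
        exact mul_le_mul_of_nonneg_left (norm_sub_le _ _) (by norm_num)
      set a1 := Real.sqrt (Complex.re ⟪(T - μ • X) x, x⟫_ℂ) with ha1def
      set a2 := Real.sqrt (Complex.re ⟪(T + μ • X) x, x⟫_ℂ) with ha2def
      set b1 := Real.sqrt (Complex.re ⟪(T - μ • X) y, y⟫_ℂ) with hb1def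
      set b2 := Real.sqrt (Complex.re ⟪(T + μ • X) y, y⟫_ℂ) with hb2def
      have hcs1 := pos_inner_le hP1 x y
      have hcs2 := pos_inner_le hP2 x y
      have hP1x : (0:ℝ) ≤ Complex.re ⟪(T - μ • X) x, x⟫_ℂ := hP1.re_inner_nonneg_left x
      have hP2x : (0:ℝ) ≤ Complex.re ⟪(T + μ • X) x, x⟫_ℂ := hP2.re_inner_nonneg_left x
      have hP1y : (0:ℝ) ≤ Complex.re ⟪(T - μ • X) y, y⟫_ℂ := hP1.re_inner_nonneg_left y
      have hP2y : (0:ℝ) ≤ Complex.re ⟪(T + μ • X) y, y⟫_ℂ := hP2.re_inner_nonneg_left y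
      have hax : a1 ^ 2 + a2 ^ 2 = 2 * ‖opSqrt T x‖ ^ 2 := by
        rw [ha1def, ha2def, Real.sq_sqrt hP1x, Real.sq_sqrt hP2x, opSqrt_norm_sq T hTpos x]
        exact hsum x
      have hby : b1 ^ 2 + b2 ^ 2 = 2 * ‖opSqrt T y‖ ^ 2 := by
        rw [hb1def, hb2def, Real.sq_sqrt hP1y, Real.sq_sqrt hP2y, opSqrt_norm_sq T hTpos y]
        exact hsum y
      have hkey := real_cs a1 a2 b1 b2 (‖opSqrt T x‖) (‖opSqrt T y‖)
        (Real.sqrt_nonneg _) (Real.sqrt_nonneg _) (Real.sqrt_nonneg _) (Real.sqrt_nonneg _)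
        (norm_nonneg _) (norm_nonneg _) hax hby
      calc ‖⟪Sop x, y⟫_ℂ‖
          ≤ 2⁻¹ * (‖⟪(T - μ • X) x, y⟫_ℂ‖ + ‖⟪(T + μ • X) x, y⟫_ℂ‖) := hn1
        _ ≤ 2⁻¹ * (a1 * b1 + a2 * b2) := by
            refine mul_le_mul_of_nonneg_left ?_ (by norm_num)
            exact add_le_add hcs1 hcs2
        _ ≤ ‖opSqrt T x‖ * ‖opSqrt T y‖ := hkey
    obtain ⟨C, hCsa, hCn, hCeq⟩ := aux_factor (opSqrt T) Sop hDsa hSopsa hbound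
    refine ⟨C, hCsa, hCn, ?_⟩
    rw [hDKQ]
    exact hCeq.symm
  · rintro ⟨hTpos, C, hCsa, hCn, heq⟩
    have heq' : Sop = opSqrt T ∘L (C ∘L opSqrt T) := by
      rw [hSopdef]
      rw [hDKQ] at heq
      exact heq
    have hDD : opSqrt T ∘L opSqrt T = T := opSqrt_mul_self' T hTpos
    obtain ⟨hpos1, hpos2⟩ := onepm_pos C hCsa hCn
    have hfact : ∀ (E : 𝓗₁ →L[ℂ] 𝓗₁), (opSqrt T ∘L (E ∘L opSqrt T))
        = (ContinuousLinearMap.adjoint (opSqrt T) ∘L E) ∘L opSqrt T := by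
      intro E
      rw [hD', ContinuousLinearMap.comp_assoc]
    have hplus_pos : (T + Sop).IsPositive := by
      have h1 : (ContinuousLinearMap.adjoint (opSqrt T) ∘L (1 + C)) ∘L opSqrt T = T + Sop := by
        rw [← hfact (1 + C)]
        rw [ContinuousLinearMap.add_comp, ContinuousLinearMap.comp_add,
          ContinuousLinearMap.one_def, ContinuousLinearMap.id_comp, hDD, ← heq']
      rw [← h1]
      exact hpos1.adjoint_conj (opSqrt T)
    have hminus_pos : (T - Sop).IsPositive := by
      have h1 : (ContinuousLinearMap.adjoint (opSqrt T) ∘L (1 - C)) ∘L opSqrt T = T - Sop := by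
        rw [← hfact (1 - C)]
        rw [ContinuousLinearMap.sub_comp, ContinuousLinearMap.comp_sub,
          ContinuousLinearMap.one_def, ContinuousLinearMap.id_comp, hDD, ← heq']
      rw [← h1]
      exact hpos2.adjoint_conj (opSqrt T)
    constructor
    · rw [norm_le_one_iff_pos, hplus_eq, hTmS]
      exact hplus_pos
    · rw [norm_le_one_iff_pos, hminus_eq, hTpS]
      exact hminus_pos
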